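/- Let G be a finite graph with a percolation measure, A a set of vertices, and 0, b vertices in disjoint components of G∖A. If the quadruple (G,A,0,b) is good, i.e., P(0↔b) ≥ min_{a∈A} P(a↔b) − Σ_{W∩A=∅} P(C(0)=W)·min_{a∈A} P_{G∖W}(a↔b), then the pre-FKG inequality holds: P(0↔b) ≥ min_{a∈A} P(a↔b, 0↔A). -/

import Mathlib

/-! Take `a ∈ A` minimising `P(a ↔ b)`. Then `P(a ↔ b, 0 ↔ A) = P(a ↔ b) - P(a ↔ b, 0 ↮ A)`, and
splitting `{a ↔ b, 0 ↮ A}` according to the cluster `W` of `0` (which avoids `A`) gives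
`P(a ↔ b, 0 ↮ A) ≥ Σ_W P(C(0) = W) · P_{G∖W}(a ↔ b)`, because `{C(0) = W}` depends only on the
edges touching `W` and is therefore independent of `a ↔ b` in `G ∖ W`. Bounding
`P_{G∖W}(a ↔ b)` below by its minimum over `A`, goodness is exactly what is needed. -/

open scoped BigOperators

structure PercGraph (V E : Type) where
  ends : E → V × V
  p : E → ℝ

namespace PercGraph

variable {V E : Type} [DecidableEq V] [Fintype E] [DecidableEq E]

/-- Weight of a configuration: each edge `e` is open (`ω e = true`) with probability `p e`. -/
def weight (G : PercGraph V E) (ω : E → Bool) : ℝ :=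
  ∏ e, if ω e then G.p e else 1 - G.p e

/-- Probability of an event under the percolation measure. -/
noncomputable def prob (G : PercGraph V E) (S : Set (E → Bool)) : ℝ :=
  ∑ ω : E → Bool, Set.indicator S G.weight ω

/-- Expectation of a function under the percolation measure. -/
noncomputable def expec (G : PercGraph V E) (f : (E → Bool) → ℝ) : ℝ :=
  ∑ ω : E → Bool, f ω * G.weight ω

/-- Two vertices are adjacent via an open edge in configuration `ω`. -/
def adj (G : PercGraph V E) (ω : E → Bool) (x y : V) : Prop :=
  ∃ e, ω e = true ∧ (G.ends e = (x, y) ∨ G.ends e = (y, x))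

/-- `x` and `y` are connected by a path of open edges. -/
def Conn (G : PercGraph V E) (ω : E → Bool) (x y : V) : Prop :=
  Relation.ReflTransGen (G.adj ω) x y

/-- The union of the open clusters of the vertices of `A`. -/
def cluster (G : PercGraph V E) (ω : E → Bool) (A : Set V) : Set V :=
  {y | ∃ a ∈ A, G.Conn ω a y}

/-- The event `x ↔ y`. -/
def connEvent (G : PercGraph V E) (x y : V) : Set (E → Bool) :=
  {ω | G.Conn ω x y}

/-- The event `x ↔ A`. -/
def connTo (G : PercGraph V E) (x : V) (A : Set V) : Set (E → Bool) :=
  {ω | ∃ a ∈ A, G.Conn ω x a}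

/-- The event `A ↮ B`. -/
def disconn (G : PercGraph V E) (A B : Set V) : Set (E → Bool) :=
  {ω | ∀ a ∈ A, ∀ b ∈ B, ¬ G.Conn ω a b}

def IncreasingEvent (S : Set (E → Bool)) : Prop :=
  ∀ ⦃ω ω' : E → Bool⦄, (∀ e, ω e = true → ω' e = true) → ω ∈ S → ω' ∈ S

def DecreasingEvent (S : Set (E → Bool)) : Prop :=
  ∀ ⦃ω ω' : E → Bool⦄, (∀ e, ω e = true → ω' e = true) → ω' ∈ S → ω ∈ S

def IncreasingFun (f : (E → Bool) → ℝ) : Prop :=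
  ∀ ⦃ω ω' : E → Bool⦄, (∀ e, ω e = true → ω' e = true) → f ω ≤ f ω'

/-- `f` is determined by the cluster of `A`. -/
def ClusterDetermined (G : PercGraph V E) (A : Set V) (f : (E → Bool) → ℝ) : Prop :=
  ∀ ω ω', G.cluster ω A = G.cluster ω' A → f ω = f ω'

/-- The event `S` is determined by the cluster of `A`. -/
def ClusterDeterminedEvent (G : PercGraph V E) (A : Set V) (S : Set (E → Bool)) : Prop :=
  ∀ ω ω', G.cluster ω A = G.cluster ω' A → (ω ∈ S ↔ ω' ∈ S)

noncomputable def condProb (G : PercGraph V E) (S T : Set (E → Bool)) : ℝ :=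
  G.prob (S ∩ T) / G.prob T

noncomputable def condExpec (G : PercGraph V E) (f : (E → Bool) → ℝ) (T : Set (E → Bool)) : ℝ :=
  G.expec (T.indicator f) / G.prob T

/-- The edge `e` is incident to the vertex `x`. -/
def incident (G : PercGraph V E) (x : V) (e : E) : Prop :=
  (G.ends e).1 = x ∨ (G.ends e).2 = x

/-- The other endpoint of an edge incident to `x`. -/
def otherEnd (G : PercGraph V E) (x : V) (e : E) : V :=
  if (G.ends e).1 = x then (G.ends e).2 else (G.ends e).1

/-- The graph `G ∖ W`: delete the vertices of `W` and all incident edges. -/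
def delete (G : PercGraph V E) (W : Finset V) :
    PercGraph V {e : E // (G.ends e).1 ∉ W ∧ (G.ends e).2 ∉ W} :=
  ⟨fun e => G.ends e.1, fun e => G.p e.1⟩

/-- The graph `G` with the probability of edge `e` replaced by `q`. -/
def withEdgeProb (G : PercGraph V E) (e : E) (q : ℝ) : PercGraph V E :=
  ⟨G.ends, Function.update G.p e q⟩

/-- Contraction of the edge `e`: set its probability to 1. -/
def contract (G : PercGraph V E) (e : E) : PercGraph V E :=
  G.withEdgeProb e 1

/-- The event that `e` is pivotal for `U`. -/
def pivotal (e : E) (U : Set (E → Bool)) : Set (E → Bool) :=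
  {ω | ¬ ((Function.update ω e true ∈ U) ↔ (Function.update ω e false ∈ U))}

/-- All edge probabilities lie in `[0,1]`. -/
def ProbValid (G : PercGraph V E) : Prop := ∀ e, 0 ≤ G.p e ∧ G.p e ≤ 1

end PercGraph

namespace PercGraph

variable {V E : Type} [Fintype V] [DecidableEq V] [Fintype E] [DecidableEq E]

/-- The quadruple `(G, A, x₀, b)` is *good*:
`P(0↔b) ≥ min_{a∈A} P(a↔b) − Σ_{W∩A=∅} P(C(0)=W)·min_{a∈A} P_{G∖W}(a↔b)`. -/
noncomputable def Good (G : PercGraph V E) (A : Finset V) (hA : A.Nonempty)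
    (x₀ b : V) : Prop :=
  A.inf' hA (fun a => G.prob (G.connEvent a b)) -
      ∑ W ∈ Finset.univ.filter (fun W : Finset V => W ∩ A = ∅),
        G.prob {ω | G.cluster ω {x₀} = ↑W} *
          A.inf' hA (fun a => (G.delete W).prob ((G.delete W).connEvent a b))
    ≤ G.prob (G.connEvent x₀ b)

end PercGraph

namespace PercGraph

variable {V E : Type} (G : PercGraph V E)

/-- `G.delete W` is, definitionally, `G.restrict` to the edges with no endpoint in `W`. -/
def restrict (q : E → Prop) : PercGraph V {e // q e} :=
  ⟨fun e => G.ends e.1, fun e => G.p e.1⟩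

section Weight

variable [Fintype E]

lemma weight_nonneg (hp : G.ProbValid) (ω : E → Bool) : 0 ≤ G.weight ω :=
  Finset.prod_nonneg fun e _ => by
    cases ω e
    · simpa using (hp e).2
    · simpa using (hp e).1

lemma sum_weight [DecidableEq E] : ∑ ω : E → Bool, G.weight ω = 1 :=
  calc ∑ ω : E → Bool, G.weight ω = ∏ e, ∑ b : Bool, if b then G.p e else 1 - G.p e :=
        (Fintype.prod_sum fun e (b : Bool) => if b then G.p e else 1 - G.p e).symm
    _ = 1 := by simp

lemma weight_eq_mul (q : E → Prop) [DecidablePred q] (ω : E → Bool) :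
    G.weight ω = (G.restrict q).weight (fun e => ω e.1) *
      (G.restrict (¬ q ·)).weight (fun e => ω e.1) :=
  (Fintype.prod_subtype_mul_prod_subtype q _).symm

end Weight

section Prob

variable [Fintype E] [DecidableEq E]

lemma prob_nonneg (hp : G.ProbValid) (S : Set (E → Bool)) : 0 ≤ G.prob S :=
  Finset.sum_nonneg fun ω _ => Set.indicator_nonneg (fun ω _ => G.weight_nonneg hp ω) ω

lemma prob_univ : G.prob Set.univ = 1 := by
  simp only [prob, Set.indicator_univ, sum_weight]

lemma prob_mono (hp : G.ProbValid) {S T : Set (E → Bool)} (h : S ⊆ T) : G.prob S ≤ G.prob T :=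
  Finset.sum_le_sum fun ω _ =>
    Set.indicator_le_indicator_of_subset h (G.weight_nonneg hp) ω

lemma prob_biUnion {ι : Type*} (F : Finset ι) (S : ι → Set (E → Bool))
    (hS : (F : Set ι).PairwiseDisjoint S) :
    G.prob (⋃ i ∈ F, S i) = ∑ i ∈ F, G.prob (S i) := by
  simp only [prob, Finset.indicator_biUnion_apply F S hS]
  exact Finset.sum_comm

lemma prob_inter_add_prob_diff (S T : Set (E → Bool)) :
    G.prob (S ∩ T) + G.prob (S \ T) = G.prob S := by
  rw [prob, prob, ← Finset.sum_add_distrib, prob, ← Set.inter_union_sdiff S T,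
    Set.indicator_union_of_disjoint (Set.disjoint_sdiff_inter.symm), Set.inter_union_sdiff]

variable (q : E → Prop) [DecidablePred q]

lemma prob_restrict_mem_and (S₁ : Set ({e // q e} → Bool)) (S₂ : Set ({e // ¬ q e} → Bool)) :
    G.prob {ω | (fun e : {e // q e} => ω e.1) ∈ S₁ ∧ (fun e : {e // ¬ q e} => ω e.1) ∈ S₂} =
      (G.restrict q).prob S₁ * (G.restrict (¬ q ·)).prob S₂ := by
  rw [prob, prob, prob, Finset.sum_mul_sum, ← Fintype.sum_prod_type']
  refine Fintype.sum_equiv (Equiv.piEquivPiSubtypeProd q fun _ => Bool) _ _ fun ω => ?_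
  by_cases h₁ : (fun e : {e // q e} => ω e.1) ∈ S₁ <;>
    by_cases h₂ : (fun e : {e // ¬ q e} => ω e.1) ∈ S₂ <;>
    simp [Set.indicator, h₁, h₂, G.weight_eq_mul q ω]

lemma prob_inter_restrict_preimage (S : Set (E → Bool))
    (hS : ∀ ω ω', (∀ e, ¬ q e → ω e = ω' e) → ω ∈ S → ω' ∈ S) (T : Set ({e // q e} → Bool)) :
    G.prob (S ∩ {ω | (fun e : {e // q e} => ω e.1) ∈ T}) = (G.restrict q).prob T * G.prob S := by
  set S₂ : Set ({e // ¬ q e} → Bool) := (fun ω e => ω e.1) '' S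
  have hS₂ : S = {ω | (fun e : {e // ¬ q e} => ω e.1) ∈ S₂} := by
    ext ω
    refine ⟨fun h => ⟨ω, h, rfl⟩, fun ⟨ω', h', hω⟩ => hS ω' ω (fun e he => congrFun hω ⟨e, he⟩) h'⟩
  have hprobS : G.prob S = (G.restrict (¬ q ·)).prob S₂ := by
    simpa [prob_univ, ← hS₂] using G.prob_restrict_mem_and q Set.univ S₂
  rw [hprobS, ← prob_restrict_mem_and, hS₂, Set.inter_comm]
  rfl

end Prob

lemma conn_of_conn_restrict {q : E → Prop} {ω : E → Bool} {x y : V}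
    (h : (G.restrict q).Conn (fun e => ω e.1) x y) : G.Conn ω x y := by
  induction h with
  | refl => exact .refl
  | tail _ hadj ih =>
    obtain ⟨e, he, hends⟩ := hadj
    exact ih.tail ⟨e.1, he, hends⟩

lemma mem_cluster_singleton {ω : E → Bool} {x y : V} : y ∈ G.cluster ω {x} ↔ G.Conn ω x y := by
  simp [cluster]

lemma conn_of_conn_of_eq_on_incident {W : Set V} {ω ω' : E → Bool} {x : V}
    (hW : ∀ y, G.Conn ω x y → y ∈ W)
    (hagree : ∀ e, (G.ends e).1 ∈ W ∨ (G.ends e).2 ∈ W → ω e = ω' e)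
    {y : V} (h : G.Conn ω' x y) : G.Conn ω x y := by
  induction h with
  | refl => exact .refl
  | @tail y z _ hadj ih =>
    obtain ⟨e, he, hends⟩ := hadj
    have hyW := hW y ih
    have hincident : (G.ends e).1 ∈ W ∨ (G.ends e).2 ∈ W := by
      rcases hends with h | h <;> simp [h, hyW]
    exact ih.tail ⟨e, (hagree e hincident).trans he, hends⟩

lemma cluster_singleton_eq_of_eq_on_incident {W : Set V} {ω ω' : E → Bool} {x : V}
    (h : G.cluster ω {x} = W)
    (hagree : ∀ e, (G.ends e).1 ∈ W ∨ (G.ends e).2 ∈ W → ω e = ω' e) :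
    G.cluster ω' {x} = W := by
  have hW : ∀ y, G.Conn ω x y → y ∈ W := fun y hy => h ▸ (G.mem_cluster_singleton.2 hy)
  have hW' : ∀ y, G.Conn ω' x y → y ∈ W := fun y hy =>
    hW y (G.conn_of_conn_of_eq_on_incident hW hagree hy)
  ext y
  refine ⟨fun hy => hW' y (G.mem_cluster_singleton.1 hy), fun hy => G.mem_cluster_singleton.2 ?_⟩
  refine G.conn_of_conn_of_eq_on_incident hW' (fun e he => (hagree e he).symm) ?_
  exact G.mem_cluster_singleton.1 (h ▸ hy)

variable [Fintype V] [DecidableEq V] [Fintype E] [DecidableEq E]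

/-- `{C(x) = W}` only depends on edges touching `W`, hence is independent of `a ↔ b` in `G ∖ W`;
the events `{C(x) = W, a ↔ b in G ∖ W}` are disjoint and lie in `{a ↔ b, x ↮ A}`. -/
lemma sum_prob_cluster_mul_prob_delete_le (hp : G.ProbValid) (A : Finset V) (x a b : V) :
    ∑ W ∈ Finset.univ.filter (fun W : Finset V => W ∩ A = ∅),
        G.prob {ω | G.cluster ω {x} = ↑W} * (G.delete W).prob ((G.delete W).connEvent a b)
      ≤ G.prob (G.connEvent a b \ G.connTo x ↑A) := by
  set F := Finset.univ.filter (fun W : Finset V => W ∩ A = ∅)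
  let S : Finset V → Set (E → Bool) := fun W =>
    {ω | G.cluster ω {x} = ↑W} ∩ {ω | (fun e => ω e.1) ∈ (G.delete W).connEvent a b}
  have hdisj : (F : Set (Finset V)).PairwiseDisjoint S := fun W₁ _ W₂ _ hne =>
    Set.disjoint_left.2 fun ω h₁ h₂ => hne (Finset.coe_injective (h₁.1.symm.trans h₂.1))
  have hsub : (⋃ W ∈ F, S W) ⊆ G.connEvent a b \ G.connTo x ↑A := by
    simp only [Set.iUnion_subset_iff]
    rintro W hW ω ⟨hC, hab⟩
    replace hC : G.cluster ω {x} = ↑W := hC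
    refine ⟨G.conn_of_conn_restrict hab, fun ⟨a', ha'A, hxa'⟩ => ?_⟩
    have ha'W : a' ∈ (W : Set V) := hC ▸ G.mem_cluster_singleton.2 hxa'
    simp only [F, Finset.mem_filter] at hW
    simpa [hW.2] using Finset.mem_inter.2 ⟨ha'W, ha'A⟩
  calc _ = ∑ W ∈ F, G.prob (S W) := Finset.sum_congr rfl fun W _ => by
        rw [mul_comm]
        refine (G.prob_inter_restrict_preimage _ _ (fun ω ω' hagree h => ?_) _).symm
        exact G.cluster_singleton_eq_of_eq_on_incident h fun e he => hagree e (by tauto)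
    _ = G.prob (⋃ W ∈ F, S W) := (G.prob_biUnion F S hdisj).symm
    _ ≤ _ := G.prob_mono hp hsub

end PercGraph

theorem preFKG_of_good_general
    {V E : Type} [Fintype V] [DecidableEq V] [Fintype E] [DecidableEq E]
    (G : PercGraph V E) (hp : G.ProbValid) (A : Finset V) (hA : A.Nonempty)
    (x₀ b : V)
    (hgood : G.Good A hA x₀ b) :
    A.inf' hA (fun a => G.prob (G.connEvent a b ∩ G.connTo x₀ ↑A))
      ≤ G.prob (G.connEvent x₀ b) := by
  obtain ⟨a, haA, ha⟩ := Finset.exists_mem_eq_inf' hA (fun a => G.prob (G.connEvent a b))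
  have hsplit := G.prob_inter_add_prob_diff (G.connEvent a b) (G.connTo x₀ ↑A)
  have hmin : ∀ W : Finset V,
      G.prob {ω | G.cluster ω {x₀} = ↑W} *
          A.inf' hA (fun a => (G.delete W).prob ((G.delete W).connEvent a b))
        ≤ G.prob {ω | G.cluster ω {x₀} = ↑W} * (G.delete W).prob ((G.delete W).connEvent a b) :=
    fun W => mul_le_mul_of_nonneg_left (Finset.inf'_le _ haA) (G.prob_nonneg hp _)
  have hdecomp := (Finset.sum_le_sum fun W _ => hmin W).trans
    (G.sum_prob_cluster_mul_prob_delete_le hp A x₀ a b)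
  refine (Finset.inf'_le _ haA).trans (le_trans ?_ hgood)
  rw [ha]
  linarith

/-- a good quadruple satisfies the pre-FKG inequality
`P(0↔b) ≥ min_{a∈A} P(a↔b, 0↔A)`. -/
theorem preFKG_of_good
    {V E : Type} [Fintype V] [DecidableEq V] [Fintype E] [DecidableEq E]
    (G : PercGraph V E) (hp : G.ProbValid) (A : Finset V) (hA : A.Nonempty)
    (x₀ b : V)
    (hdisj : ¬ (G.delete A).Conn (fun _ => true) x₀ b)
    (hgood : G.Good A hA x₀ b) :
    A.inf' hA (fun a => G.prob (G.connEvent a b ∩ G.connTo x₀ ↑A))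
      ≤ G.prob (G.connEvent x₀ b) :=
  preFKG_of_good_general G hp A hA x₀ b hgood
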